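/- arXiv:2504.10933 — 3 statements merged into one kernel-verified Lean document; each statement's English description precedes it below -/
import Mathlib

section
/- There exist vectors a, b, c in H(β) such that the triangle inequality d_Lo(a,b) ≤ d_Lo(a,c) + d_Lo(b,c) fails. Specifically, for any a₀ > √β with a = (a₀, a₁, ..., aₙ) ∈ H(β), taking b = (a₀, -a₁, ..., -aₙ) and c = (√β, 0, ..., 0), one has d_Lo(a,b) = 2a₀² - 2β while d_Lo(a,c) + d_Lo(b,c) = 2a₀√β - 2β, and 2a₀√β - 2β < 2a₀² - 2β. -/
noncomputable def linner {n : ℕ} (a b : Fin (n+1) → ℝ) : ℝ :=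
  -(a 0 * b 0) + ∑ i : Fin n, a i.succ * b i.succ

def Hyp (n : ℕ) (β : ℝ) : Set (Fin (n+1) → ℝ) :=
  {x | linner x x = -β ∧ Real.sqrt β ≤ x 0}

noncomputable def dLo {n : ℕ} (β : ℝ) (a b : Fin (n+1) → ℝ) : ℝ :=
  |linner a b| - β

theorem triangle_inequality_fails {n : ℕ} (hn : 1 ≤ n) {β : ℝ} (hβ : 0 < β)
    (a : Fin (n+1) → ℝ) (ha : a ∈ Hyp n β) (ha0 : Real.sqrt β < a 0) :
    ∃ b c : Fin (n+1) → ℝ,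
      b = (fun i => if i = 0 then a 0 else -a i) ∧
      c = (fun i => if i = 0 then Real.sqrt β else 0) ∧
      b ∈ Hyp n β ∧ c ∈ Hyp n β ∧
      dLo β a b = 2 * (a 0)^2 - 2 * β ∧
      dLo β a c + dLo β b c = 2 * a 0 * Real.sqrt β - 2 * β ∧
      2 * a 0 * Real.sqrt β - 2 * β < 2 * (a 0)^2 - 2 * β ∧
      ¬ (dLo β a b ≤ dLo β a c + dLo β b c) := by
  set b : Fin (n+1) → ℝ := fun i => if i = 0 then a 0 else -a i with hb
  set c : Fin (n+1) → ℝ := fun i => if i = 0 then Real.sqrt β else 0 with hc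
  have hs : Real.sqrt β > 0 := Real.sqrt_pos.mpr hβ
  have ha0pos : 0 < a 0 := lt_trans hs ha0
  have hS : ∑ i : Fin n, a i.succ * a i.succ = a 0 ^ 2 - β := by
    have := ha.1
    unfold linner at this
    nlinarith [this]
  have hb0 : b 0 = a 0 := by simp [hb]
  have hbs : ∀ i : Fin n, b i.succ = -a i.succ := by
    intro i; simp [hb, Fin.succ_ne_zero]
  have hc0 : c 0 = Real.sqrt β := by simp [hc]
  have hcs : ∀ i : Fin n, c i.succ = 0 := by
    intro i; simp [hc, Fin.succ_ne_zero]
  have hbb : linner b b = -β := by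
    unfold linner
    simp only [hb0, hbs]
    have : ∑ i : Fin n, -a i.succ * -a i.succ = ∑ i : Fin n, a i.succ * a i.succ := by
      apply Finset.sum_congr rfl; intros; ring
    rw [this, hS]; ring
  have hcc : linner c c = -β := by
    unfold linner
    simp only [hc0, hcs]
    rw [Real.mul_self_sqrt hβ.le]; simp
  have hab : linner a b = -(2 * a 0 ^ 2 - β) := by
    unfold linner
    simp only [hb0, hbs]
    have : ∑ i : Fin n, a i.succ * -a i.succ = -∑ i : Fin n, a i.succ * a i.succ := by
      rw [← Finset.sum_neg_distrib]; apply Finset.sum_congr rfl; intros; ring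
    rw [this, hS]; ring
  have hac : linner a c = -(a 0 * Real.sqrt β) := by
    unfold linner
    simp only [hc0, hcs, mul_zero, Finset.sum_const_zero]; ring
  have hbc : linner b c = -(a 0 * Real.sqrt β) := by
    unfold linner
    simp only [hb0, hc0, hcs, mul_zero, Finset.sum_const_zero]; ring
  have hβlt : β < a 0 ^ 2 := by nlinarith [Real.sq_sqrt hβ.le]
  have hdab : dLo β a b = 2 * (a 0)^2 - 2 * β := by
    unfold dLo
    rw [hab, abs_neg, abs_of_pos (by nlinarith)]; ring
  have hdac : dLo β a c = a 0 * Real.sqrt β - β := by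
    unfold dLo
    rw [hac, abs_neg, abs_of_pos (by positivity)]
  have hdbc : dLo β b c = a 0 * Real.sqrt β - β := by
    unfold dLo
    rw [hbc, abs_neg, abs_of_pos (by positivity)]
  have hlt : 2 * a 0 * Real.sqrt β - 2 * β < 2 * (a 0)^2 - 2 * β := by nlinarith
  refine ⟨b, c, rfl, rfl, ⟨hbb, by rw [hb0]; exact ha.2⟩, ⟨hcc, by rw [hc0]⟩,
    hdab, by rw [hdac, hdbc]; ring, hlt, ?_⟩
  rw [hdab, hdac, hdbc]
  intro h; nlinarith
end

section
/- Let a = (a₀, a₁, ..., aₙ) ∈ H_{n+1}(β) and, for α > 0, define b = (a₀·√(α²Σ_{i=1}^n aᵢ² + β)/√(Σ_{i=1}^n aᵢ² + β), αa₁, ..., αaₙ). Then b ∈ H_{n+1}(β); moreover, the corresponding 2-dimensional vectors a' = (a₀, √(Σ_{i=1}^n aᵢ²)) and b' = (a₀·√(α²Σ aᵢ² + β)/√(Σ aᵢ² + β), α√(Σ aᵢ²)) lie in H₂(β) and satisfy d_Lo(a,b) = d_Lo(a',b'). -/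
theorem dim_reduction {n : ℕ} (hn : 1 ≤ n) {β : ℝ} (hβ : 0 < β) (α : ℝ) (hα : 0 < α)
    (a : Fin (n+1) → ℝ) (ha : a ∈ Hyp n β)
    (hS : 0 < ∑ i : Fin n, (a i.succ)^2) :
    (Fin.cons
        (a 0 * Real.sqrt (α^2 * ∑ i : Fin n, (a i.succ)^2 + β) /
          Real.sqrt ((∑ i : Fin n, (a i.succ)^2) + β))
        (fun i : Fin n => α * a i.succ) : Fin (n+1) → ℝ) ∈ Hyp n β ∧
    (![a 0, Real.sqrt (∑ i : Fin n, (a i.succ)^2)] : Fin 2 → ℝ) ∈ Hyp 1 β ∧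
    (![a 0 * Real.sqrt (α^2 * ∑ i : Fin n, (a i.succ)^2 + β) /
          Real.sqrt ((∑ i : Fin n, (a i.succ)^2) + β),
        α * Real.sqrt (∑ i : Fin n, (a i.succ)^2)] : Fin 2 → ℝ) ∈ Hyp 1 β ∧
    dLo β a
      (Fin.cons
        (a 0 * Real.sqrt (α^2 * ∑ i : Fin n, (a i.succ)^2 + β) /
          Real.sqrt ((∑ i : Fin n, (a i.succ)^2) + β))
        (fun i : Fin n => α * a i.succ))
      = dLo β
          (![a 0, Real.sqrt (∑ i : Fin n, (a i.succ)^2)])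
          (![a 0 * Real.sqrt (α^2 * ∑ i : Fin n, (a i.succ)^2 + β) /
              Real.sqrt ((∑ i : Fin n, (a i.succ)^2) + β),
            α * Real.sqrt (∑ i : Fin n, (a i.succ)^2)]) := by
  obtain ⟨ha1, ha2⟩ := ha
  set S := ∑ i : Fin n, (a i.succ)^2 with hSdef
  have hsum : ∑ i : Fin n, a i.succ * a i.succ = S := by
    rw [hSdef]; exact Finset.sum_congr rfl fun i _ => (sq (a i.succ)).symm
  have ha0pos : 0 < a 0 := lt_of_lt_of_le (Real.sqrt_pos.mpr hβ) ha2
  have hlin : -(a 0 * a 0) + S = -β := by rw [← hsum]; exact ha1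
  have ha0sq : a 0 ^ 2 = S + β := by nlinarith
  have hSβ : 0 < S + β := by positivity
  have hαSβ : 0 < α ^ 2 * S + β := by positivity
  have ha0 : a 0 = Real.sqrt (S + β) := by
    rw [← ha0sq, Real.sqrt_sq ha0pos.le]
  have hne : Real.sqrt (S + β) ≠ 0 := ne_of_gt (Real.sqrt_pos.mpr hSβ)
  have hb0val : a 0 * Real.sqrt (α ^ 2 * S + β) / Real.sqrt (S + β)
      = Real.sqrt (α ^ 2 * S + β) := by
    rw [ha0, mul_comm, mul_div_assoc, div_self hne, mul_one]
  have hb0sq : Real.sqrt (α ^ 2 * S + β) ^ 2 = α ^ 2 * S + β :=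
    Real.sq_sqrt hαSβ.le
  have hb0ge : Real.sqrt β ≤ Real.sqrt (α ^ 2 * S + β) :=
    Real.sqrt_le_sqrt (by nlinarith)
  have hsqS : Real.sqrt S * Real.sqrt S = S := Real.mul_self_sqrt hS.le
  have hsqSge : 0 ≤ Real.sqrt S := Real.sqrt_nonneg S
  refine ⟨⟨?_, ?_⟩, ⟨?_, ha2⟩, ⟨?_, ?_⟩, ?_⟩
  · simp only [linner, Fin.cons_zero, Fin.cons_succ, hb0val]
    have h1 : ∑ i : Fin n, α * a i.succ * (α * a i.succ) = α ^ 2 * S := by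
      rw [hSdef, Finset.mul_sum]
      exact Finset.sum_congr rfl fun i _ => by ring
    rw [h1]
    nlinarith
  · rw [Fin.cons_zero, hb0val]; exact hb0ge
  · simp only [linner, Fin.sum_univ_one, Matrix.cons_val_zero]
    show -(a 0 * a 0) + Real.sqrt S * Real.sqrt S = -β
    rw [hsqS]; linarith
  · simp only [linner, Fin.sum_univ_one, Matrix.cons_val_zero, hb0val]
    show -(Real.sqrt (α ^ 2 * S + β) * Real.sqrt (α ^ 2 * S + β))
        + α * Real.sqrt S * (α * Real.sqrt S) = -β
    nlinarith
  · rw [Matrix.cons_val_zero, hb0val]; exact hb0ge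
  · unfold dLo
    congr 2
    simp only [linner, Fin.cons_zero, Fin.cons_succ, Fin.sum_univ_one,
      Matrix.cons_val_zero, Matrix.cons_val_one, Matrix.head_cons,
      Fin.succ_zero_eq_one, hb0val]
    have h2 : ∑ i : Fin n, a i.succ * (α * a i.succ) = α * S := by
      rw [hSdef, Finset.mul_sum]
      exact Finset.sum_congr rfl fun i _ => by ring
    rw [h2]
    linear_combination -α * hsqS
end

section
/- Consider the sequence of pairs a(t) = φ(t·u), b(t) = φ(t·u + v) under the vanilla projection φ in ℝ² (n=1), where u = 1 and v > 0 is fixed: a(t) = (√(t² + β), t), b(t) = (√((t+v)² + β), t+v). Then the Lorentz distance d_Lo(a(t), b(t)) tends to 0 as t → ∞, even though the Euclidean distance between the preimages is constantly v. -/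
/-!
Write `√(x² + β) = x + g x`, where `g x → 0` and `x · g x → β / 2` as `x → ∞`
(both read off from `2 x g x + (g x)² = β`). Then
`√(t² + β) √((t + v)² + β) - t (t + v) = t g (t + v) + (t + v) g t + g t g (t + v)`
tends to `β / 2 + β / 2`, and this quantity is nonnegative by Cauchy–Schwarz, so the
Lorentz distance tends to `β - β = 0`.
-/

open Filter Topology

/-- The gap between the hyperbola `y² - x² = β` and its asymptote `y = x`. -/
noncomputable def hyperbolaGap (β x : ℝ) : ℝ := √(x ^ 2 + β) - x

section hyperbolaGap

variable {β : ℝ}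

lemma sqrt_sq_add_eq_add_hyperbolaGap (β x : ℝ) : √(x ^ 2 + β) = x + hyperbolaGap β x := by
  rw [hyperbolaGap, add_sub_cancel]

lemma hyperbolaGap_nonneg (hβ : 0 ≤ β) (x : ℝ) : 0 ≤ hyperbolaGap β x :=
  sub_nonneg.2 <| (le_abs_self x).trans <| Real.abs_le_sqrt (by linarith)

lemma two_mul_mul_hyperbolaGap_add_sq (hβ : 0 ≤ β) (x : ℝ) :
    2 * x * hyperbolaGap β x + hyperbolaGap β x ^ 2 = β := by
  have h := Real.sq_sqrt (by positivity : 0 ≤ x ^ 2 + β)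
  rw [sqrt_sq_add_eq_add_hyperbolaGap] at h
  linear_combination h

lemma hyperbolaGap_le (hβ : 0 ≤ β) {x : ℝ} (hx : 0 < x) :
    hyperbolaGap β x ≤ β / (2 * x) := by
  rw [le_div_iff₀ (by positivity)]
  nlinarith [two_mul_mul_hyperbolaGap_add_sq hβ x, sq_nonneg (hyperbolaGap β x)]

lemma tendsto_hyperbolaGap_atTop (hβ : 0 ≤ β) : Tendsto (hyperbolaGap β) atTop (𝓝 0) := by
  have hbound : Tendsto (fun x : ℝ => β / (2 * x)) atTop (𝓝 0) :=
    tendsto_const_nhds.div_atTop (tendsto_id.const_mul_atTop two_pos)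
  refine tendsto_of_tendsto_of_tendsto_of_le_of_le' tendsto_const_nhds hbound
    (Eventually.of_forall (hyperbolaGap_nonneg hβ)) ?_
  filter_upwards [eventually_gt_atTop 0] with x hx using hyperbolaGap_le hβ hx

lemma tendsto_mul_hyperbolaGap_atTop (hβ : 0 ≤ β) :
    Tendsto (fun x => x * hyperbolaGap β x) atTop (𝓝 (β / 2)) := by
  have h := ((tendsto_hyperbolaGap_atTop hβ).pow 2).const_sub β |>.div_const 2
  rw [zero_pow two_ne_zero, sub_zero] at h
  refine h.congr fun x => ?_
  linear_combination -(two_mul_mul_hyperbolaGap_add_sq hβ x) / 2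

end hyperbolaGap

lemma mul_le_sqrt_sq_add_mul_sqrt_sq_add {β : ℝ} (hβ : 0 ≤ β) (x y : ℝ) :
    x * y ≤ √(x ^ 2 + β) * √(y ^ 2 + β) :=
  calc x * y ≤ |x| * |y| := abs_mul x y ▸ le_abs_self _
    _ ≤ √(x ^ 2 + β) * √(y ^ 2 + β) :=
      mul_le_mul (Real.abs_le_sqrt (by linarith)) (Real.abs_le_sqrt (by linarith))
        (abs_nonneg _) (Real.sqrt_nonneg _)

lemma tendsto_sqrt_mul_sqrt_sub_mul_atTop {β : ℝ} (hβ : 0 ≤ β) (v : ℝ) :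
    Tendsto (fun t => √(t ^ 2 + β) * √((t + v) ^ 2 + β) - t * (t + v)) atTop (𝓝 β) := by
  have hshift : Tendsto (fun t : ℝ => t + v) atTop atTop :=
    tendsto_atTop_add_const_right _ v tendsto_id
  have hg := tendsto_hyperbolaGap_atTop hβ
  have hxg := tendsto_mul_hyperbolaGap_atTop hβ
  have hlim := ((hxg.add (hxg.comp hshift)).add ((hg.sub (hg.comp hshift)).const_mul v)).add
    (hg.mul (hg.comp hshift))
  rw [sub_self, mul_zero, add_zero, mul_zero, add_zero, add_halves] at hlim
  refine hlim.congr fun t => ?_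
  simp only [Function.comp_apply, sqrt_sq_add_eq_add_hyperbolaGap]
  ring

theorem vanilla_proj_distance_degenerates {β v : ℝ} (hβ : 0 < β) (hv : 0 < v) :
    Filter.Tendsto
      (fun t : ℝ =>
        |(-(Real.sqrt (t^2 + β) * Real.sqrt ((t + v)^2 + β)) + t * (t + v))| - β)
      Filter.atTop (nhds 0) ∧
    ∀ t : ℝ, |(t + v) - t| = v := by
  refine ⟨?_, fun t => by rw [add_sub_cancel_left, abs_of_pos hv]⟩
  have h := (tendsto_sqrt_mul_sqrt_sub_mul_atTop hβ.le v).sub_const β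
  rw [sub_self] at h
  refine h.congr fun t => ?_
  rw [abs_of_nonpos (by linarith [mul_le_sqrt_sq_add_mul_sqrt_sq_add hβ.le t (t + v)])]
  ring
end
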